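/- Suppose for each n the constant C_n satisfies C_n ≤ 1 and ∏_{i=1}^n x_i + C_n lies in the quadratic module M generated by g_i(x) = x_i(1-x_i), i=1,…,n (with degree bound 2⌈n/2⌉). Define C'_n := ∑_{i=1}^n C_i. Then for every n ≥ 1, 1 - ∏_{i=1}^n x_i + C'_n lies in the quadratic module generated by g₁,…,g_n (with degree bound 2⌈n/2⌉). -/

import Mathlib

open MvPolynomial

/-- `p` is a sum of squares of polynomials. -/
def IsSOS {n : ℕ} (p : MvPolynomial (Fin n) ℝ) : Prop :=
  ∃ (k : ℕ) (q : Fin k → MvPolynomial (Fin n) ℝ), p = ∑ i, q i ^ 2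

/-- Membership in the degree-`r` truncated quadratic module generated by
`gᵢ = Xᵢ(1-Xᵢ)`, `i = 1,…,n`. -/
def InQM (n r : ℕ) (p : MvPolynomial (Fin n) ℝ) : Prop :=
  ∃ (σ₀ : MvPolynomial (Fin n) ℝ) (σ : Fin n → MvPolynomial (Fin n) ℝ),
    IsSOS σ₀ ∧ (∀ i, IsSOS (σ i)) ∧
    σ₀.totalDegree ≤ r ∧
    (∀ i, (σ i * (X i * (1 - X i))).totalDegree ≤ r) ∧
    p = σ₀ + ∑ i, σ i * (X i * (1 - X i))

/-! Induction on `n`: `1 - x₁⋯xₙ₊₁ + C'ₙ₊₁` is the sum of `1 - x₁⋯xₙ + C'ₙ`, read in one more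
variable, and of the image of `x₁⋯xₙ₊₁ + Cₙ₊₁` under `xₙ₊₁ ↦ 1 - xₙ₊₁`, which is
`(1 - xₙ₊₁)·x₁⋯xₙ + Cₙ₊₁`. Both substitutions are affine and carry each generator `xᵢ(1 - xᵢ)` to
a generator, so they preserve membership without raising degrees, and the bound `2⌈n/2⌉` only
grows with `n`. -/

open Function

theorem MvPolynomial.totalDegree_aeval_le {R σ τ : Type*} [CommSemiring R] {d : ℕ}
    (φ : σ → MvPolynomial τ R) (hφ : ∀ i, (φ i).totalDegree ≤ d) (p : MvPolynomial σ R) :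
    (aeval φ p).totalDegree ≤ p.totalDegree * d := by
  conv_lhs => rw [p.as_sum]
  rw [map_sum]
  refine (totalDegree_finsetSum _ _).trans (Finset.sup_le fun v hv => ?_)
  rw [aeval_monomial, ← C_eq_algebraMap]
  calc (C (coeff v p) * v.prod fun i k => φ i ^ k).totalDegree
      ≤ ∑ i ∈ v.support, (φ i ^ v i).totalDegree := by
        refine (totalDegree_mul _ _).trans ?_
        rw [totalDegree_C, zero_add]
        exact totalDegree_finsetProd _ _
    _ ≤ ∑ i ∈ v.support, v i * d :=
        Finset.sum_le_sum fun i _ => (totalDegree_pow _ _).trans (Nat.mul_le_mul_left _ (hφ i))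
    _ ≤ p.totalDegree * d := by
        rw [← Finset.sum_mul]
        exact Nat.mul_le_mul_right _ (le_totalDegree hv)

namespace IsSOS

variable {n : ℕ}

theorem zero : IsSOS (0 : MvPolynomial (Fin n) ℝ) :=
  ⟨0, Fin.elim0, by simp⟩

theorem add {p q : MvPolynomial (Fin n) ℝ} (hp : IsSOS p) (hq : IsSOS q) : IsSOS (p + q) := by
  obtain ⟨k, f, rfl⟩ := hp
  obtain ⟨l, g, rfl⟩ := hq
  exact ⟨k + l, Fin.append f g, by simp [Fin.sum_univ_add]⟩

theorem map {m : ℕ} {p : MvPolynomial (Fin n) ℝ} (hp : IsSOS p)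
    (φ : MvPolynomial (Fin n) ℝ →ₐ[ℝ] MvPolynomial (Fin m) ℝ) : IsSOS (φ p) := by
  obtain ⟨k, f, rfl⟩ := hp
  exact ⟨k, fun i => φ (f i), by simp⟩

end IsSOS

namespace InQM

variable {n r : ℕ} {p q : MvPolynomial (Fin n) ℝ}

theorem zero : InQM n r 0 :=
  ⟨0, 0, .zero, fun _ => .zero, by simp, fun _ => by simp, by simp⟩

theorem add (hp : InQM n r p) (hq : InQM n r q) : InQM n r (p + q) := by
  obtain ⟨a, s, ha, hs, hda, hds, rfl⟩ := hp
  obtain ⟨b, t, hb, ht, hdb, hdt, rfl⟩ := hq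
  refine ⟨a + b, s + t, ha.add hb, fun i => (hs i).add (ht i),
    (totalDegree_add a b).trans (max_le hda hdb), fun i => ?_, ?_⟩
  · rw [Pi.add_apply, add_mul]
    exact (totalDegree_add _ _).trans (max_le (hds i) (hdt i))
  · simp only [Pi.add_apply, add_mul, Finset.sum_add_distrib]
    ring

theorem mono {r' : ℕ} (hp : InQM n r p) (h : r ≤ r') : InQM n r' p := by
  obtain ⟨a, s, ha, hs, hda, hds, rfl⟩ := hp
  exact ⟨a, s, ha, hs, hda.trans h, fun i => (hds i).trans h, rfl⟩

theorem aeval {m : ℕ} (hp : InQM n r p) (φ : Fin n → MvPolynomial (Fin m) ℝ)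
    (hφ : ∀ i, (φ i).totalDegree ≤ 1) {e : Fin n → Fin m} (he : Injective e)
    (hg : ∀ i, aeval φ (X i * (1 - X i) : MvPolynomial (Fin n) ℝ) = X (e i) * (1 - X (e i))) :
    InQM m r (aeval φ p) := by
  obtain ⟨a, s, ha, hs, hda, hds, rfl⟩ := hp
  have hdeg (f : MvPolynomial (Fin n) ℝ) : (MvPolynomial.aeval φ f).totalDegree ≤ f.totalDegree :=
    (totalDegree_aeval_le φ hφ f).trans_eq (mul_one _)
  have hgen (i : Fin n) : MvPolynomial.aeval φ (s i) * (X (e i) * (1 - X (e i))) =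
      MvPolynomial.aeval φ (s i * (X i * (1 - X i))) := by
    rw [map_mul, hg]
  set t := extend e (fun i => MvPolynomial.aeval φ (s i)) 0
  have ht (j : Fin m) : j ∉ Set.range e → t j = 0 := fun hj => by
    simp only [t, extend_apply' _ _ _ (by simpa using hj), Pi.zero_apply]
  refine ⟨MvPolynomial.aeval φ a, t, ha.map _, fun j => ?_, (hdeg a).trans hda, fun j => ?_, ?_⟩
  · by_cases hj : j ∈ Set.range e
    · obtain ⟨i, rfl⟩ := hj
      simpa only [t, he.extend_apply] using (hs i).map _
    · simpa only [ht j hj] using IsSOS.zero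
  · by_cases hj : j ∈ Set.range e
    · obtain ⟨i, rfl⟩ := hj
      simpa only [t, he.extend_apply, hgen] using (hdeg _).trans (hds i)
    · simp [ht j hj]
  · rw [map_add, map_sum]
    congr 1
    refine Fintype.sum_of_injective e he _ _ (fun j hj => by rw [ht j hj, zero_mul]) fun i => ?_
    simp only [t, he.extend_apply, hgen]

theorem rename {m : ℕ} (hp : InQM n r p) {e : Fin n → Fin m} (he : Injective e) :
    InQM m r (MvPolynomial.rename e p) := by
  rw [← aeval_X_left_apply (MvPolynomial.rename e p), aeval_rename]
  exact hp.aeval _ (fun i => (totalDegree_X _).le) he fun i => by simp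

theorem aeval_update_one_sub_X (hp : InQM n r p) (i : Fin n) :
    InQM n r (MvPolynomial.aeval (update X i (1 - X i)) p) := by
  refine hp.aeval _ (fun j => ?_) injective_id fun j => ?_
  · rcases eq_or_ne j i with rfl | hji
    · rw [update_self]
      exact (totalDegree_sub _ _).trans (by simp)
    · simp [hji]
  · rcases eq_or_ne j i with rfl | hji
    · simp only [map_mul, map_sub, map_one, aeval_X, update_self, sub_sub_cancel, id_eq]
      exact mul_comm _ _
    · simp [hji]

end InQM

theorem rename_one_sub_prod_X_add_aeval_prod_X {n : ℕ} (a b : ℝ) :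
    rename Fin.castSucc (1 - ∏ i : Fin n, X i + C a : MvPolynomial (Fin n) ℝ) +
        aeval (update X (Fin.last n) (1 - X (Fin.last n))) (∏ i, X i + C b) =
      1 - ∏ i : Fin (n + 1), X i + C (a + b) := by
  simp only [map_add, map_sub, map_one, map_prod, rename_X, rename_C, aeval_X, aeval_C,
    algebraMap_eq]
  simp only [Fin.prod_univ_castSucc, update_self, update_of_ne (Fin.castSucc_ne_last _)]
  ring

theorem inQM_one_sub_prod_X_add_C_sum (c : ℕ → ℝ)
    (hc : ∀ n, 1 ≤ n → InQM n (2 * ((n + 1) / 2)) (∏ i, X i + C (c n))) (n : ℕ) :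
    InQM n (2 * ((n + 1) / 2)) (1 - ∏ i, X i + C (∑ i ∈ Finset.Icc 1 n, c i)) := by
  induction n with
  | zero => simpa using InQM.zero
  | succ n ih =>
    have hA := (ih.rename (Fin.castSucc_injective n)).mono
      (show 2 * ((n + 1) / 2) ≤ 2 * ((n + 1 + 1) / 2) by omega)
    have hB := (hc (n + 1) n.succ_pos).aeval_update_one_sub_X (Fin.last n)
    rw [Finset.sum_Icc_succ_top (by omega), ← rename_one_sub_prod_X_add_aeval_prod_X]
    exact hA.add hB

/-- If for each `n ≥ 1` the constant `Cₙ ≤ 1` is such that `∏ Xᵢ + Cₙ` lies in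
the quadratic module generated by `Xᵢ(1-Xᵢ)` with degree bound `2⌈n/2⌉`, then,
with `C'ₙ := ∑_{i=1}^n Cᵢ`, for every `n ≥ 1` the polynomial
`1 - ∏ Xᵢ + C'ₙ` lies in the same quadratic module (degree bound `2⌈n/2⌉`). -/
theorem stmt_11 (C : ℕ → ℝ)
    (hC : ∀ n : ℕ, 1 ≤ n → C n ≤ 1 ∧
      InQM n (2 * ((n + 1) / 2)) ((∏ i, X i) + MvPolynomial.C (C n))) :
    ∀ n : ℕ, 1 ≤ n →
      InQM n (2 * ((n + 1) / 2))
        (1 - (∏ i, X i) + MvPolynomial.C (∑ i ∈ Finset.Icc 1 n, C i)) :=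
  fun n _ => inQM_one_sub_prod_X_add_C_sum C (fun k hk => (hC k hk).2) n
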